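/- Let g : ℝⁿ → ℝ ∪ {+∞} be proper, lsc and convex, c ∈ ℝⁿ₊, and consider the alternating minimization iteration x^{k+1} ∈ prox_g(Re(P_{Z_c}(x^k))) starting from any x⁰ ∈ ℝⁿ. Then the objective values K^k = min_{z ∈ Z_c} ½‖x^k − z‖₂² + g(x^k) satisfy K^{k+1} + ½‖x^{k+1} − x^k‖₂² ≤ K^k for all k; in particular the sequence {K^k} is nonincreasing and Σ_k ‖x^{k+1} − x^k‖₂² < ∞ whenever inf_x (min_{z∈Z_c} ½‖x−z‖₂² + g(x)) > −∞. -/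

import Mathlib

/-!
Each half-step of the iteration lowers the objective. Re-projecting onto `Z_c` can only shrink
the distance term. For the prox step, Pythagoras splits `‖x - z‖²` (with `x` real) as
`‖Re z - x‖² + ‖Im z‖²`, and `y ↦ ½‖Re z - y‖² + g y` is `1`-strongly convex, so at its minimiser
`x^{k+1}` it grows at least like `½‖x^{k+1} - y‖²`; taking `y = x^k` yields the decrease term.
Summability then follows by telescoping against the lower bound.
-/

/-- Unnormalized discrete Fourier transform on `ℂⁿ`. -/
noncomputable def dft (n : ℕ) (x : EuclideanSpace ℂ (Fin n)) : EuclideanSpace ℂ (Fin n) :=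
  WithLp.toLp 2 (fun j : Fin n => ∑ t : Fin n, x t *
    Complex.exp (-2 * Real.pi * Complex.I * (j : ℕ) * (t : ℕ) / n))

/-- Embedding of `ℝⁿ` into `ℂⁿ`. -/
noncomputable def embed (n : ℕ) (x : EuclideanSpace ℝ (Fin n)) : EuclideanSpace ℂ (Fin n) :=
  WithLp.toLp 2 (fun j => (x j : ℂ))

/-- Componentwise real part, `ℂⁿ → ℝⁿ`. -/
noncomputable def rePart (n : ℕ) (z : EuclideanSpace ℂ (Fin n)) : EuclideanSpace ℝ (Fin n) :=
  WithLp.toLp 2 (fun j => (z j).re)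

open Filter Topology
open scoped RealInnerProductSpace

lemma summable_of_forall_add_le {a d : ℕ → ℝ} {m : ℝ} (hd : ∀ k, 0 ≤ d k)
    (hstep : ∀ k, a (k + 1) + d k ≤ a k) (hm : ∀ k, m ≤ a k) : Summable d :=
  summable_of_sum_range_le hd fun N => calc
    ∑ i ∈ Finset.range N, d i ≤ ∑ i ∈ Finset.range N, (a i - a (i + 1)) :=
      Finset.sum_le_sum fun i _ => by linarith [hstep i]
    _ = a 0 - a N := Finset.sum_range_sub' a N
    _ ≤ a 0 - m := by linarith [hm N]

lemma EReal.summable_of_forall_add_le {K : ℕ → EReal} {d : ℕ → ℝ} {m : ℝ}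
    (hd : ∀ k, 0 ≤ d k) (hstep : ∀ k, K (k + 1) + d k ≤ K k) (hm : ∀ k, (m : EReal) ≤ K k)
    (h0 : K 0 ≠ ⊤) : Summable d := by
  have htop : ∀ k, K k ≠ ⊤ := by
    intro k
    induction k with
    | zero => exact h0
    | succ k ih =>
      exact ne_top_of_le_ne_top ih
        ((le_add_of_nonneg_right (EReal.coe_nonneg.2 (hd k))).trans (hstep k))
  have hcoe : ∀ k, K k = ((K k).toReal : EReal) := fun k =>
    (EReal.coe_toReal (htop k) (ne_bot_of_le_ne_bot (EReal.coe_ne_bot m) (hm k))).symm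
  refine _root_.summable_of_forall_add_le (a := fun k => (K k).toReal) (m := m) hd
    (fun k => ?_) fun k => ?_
  · have h := hstep k
    rw [hcoe k, hcoe (k + 1)] at h
    exact_mod_cast h
  · have h := hm k
    rw [hcoe k] at h
    exact_mod_cast h

lemma EReal.sInf_setOf_coe_eq_of_forall_le {α : Type*} {P : α → Prop} {f : α → ℝ} {a : α}
    (ha : P a) (hmin : ∀ b, P b → f a ≤ f b) :
    sInf {e : EReal | ∃ b, P b ∧ e = f b} = f a :=
  IsLeast.csInf_eq ⟨⟨a, ha, rfl⟩, by
    rintro e ⟨b, hb, rfl⟩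
    exact EReal.coe_le_coe_iff.2 (hmin b hb)⟩

section StrongConvexity

variable {E : Type*} [NormedAddCommGroup E] [InnerProductSpace ℝ E] {s : Set E} {f : E → ℝ}

lemma ConvexOn.strongConvexOn_half_norm_sub_sq_add (hf : ConvexOn ℝ s f) (u : E) :
    StrongConvexOn s 1 (fun y => 1 / 2 * ‖u - y‖ ^ 2 + f y) := by
  rw [strongConvexOn_iff_convex]
  have haffine : ConvexOn ℝ s (fun y => 1 / 2 * ‖u‖ ^ 2 - ⟪u, y⟫) :=
    (convexOn_const _ hf.1).sub ((innerₗ E u).concaveOn hf.1)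
  refine (hf.add haffine).congr fun y _ => ?_
  simp only [Pi.add_apply, norm_sub_sq_real]
  ring

lemma StrongConvexOn.add_mul_norm_sub_sq_le_of_isMinOn {m : ℝ} (hf : StrongConvexOn s m f)
    {x y : E} (hx : x ∈ s) (hy : y ∈ s) (hmin : IsMinOn f s x) :
    f x + m / 2 * ‖x - y‖ ^ 2 ≤ f y := by
  -- compare `x` with the point `(1 - t) • x + t • y` of the segment, divide by `t`, let `t → 0⁺`
  have hsegment : ∀ t ∈ Set.Ioo (0 : ℝ) 1, f x + (1 - t) * (m / 2 * ‖x - y‖ ^ 2) ≤ f y := by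
    rintro t ⟨ht0, ht1⟩
    have hconv := hf.2 hx hy (sub_nonneg.2 ht1.le) ht0.le (sub_add_cancel 1 t)
    have hle := isMinOn_iff.1 hmin _
      (hf.1 hx hy (sub_nonneg.2 ht1.le) ht0.le (sub_add_cancel 1 t))
    rw [smul_eq_mul, smul_eq_mul] at hconv
    refine le_of_mul_le_mul_left ?_ ht0
    linear_combination hle + hconv
  have hlim : Tendsto (fun t => f x + (1 - t) * (m / 2 * ‖x - y‖ ^ 2)) (𝓝[>] 0)
      (𝓝 (f x + m / 2 * ‖x - y‖ ^ 2)) :=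
    tendsto_nhdsWithin_of_tendsto_nhds <|
      (continuous_const.add ((continuous_const.sub continuous_id).mul continuous_const)).tendsto'
        0 _ (by simp)
  exact le_of_tendsto hlim (eventually_of_mem (Ioo_mem_nhdsGT one_pos) hsegment)

end StrongConvexity

lemma convexOn_toReal_setOf_ne_top {E : Type*} [AddCommGroup E] [Module ℝ E] {g : E → EReal}
    (hbot : ∀ x, g x ≠ ⊥)
    (hconv : ∀ x y : E, ∀ a b : ℝ, 0 ≤ a → 0 ≤ b → a + b = 1 →
      g (a • x + b • y) ≤ (a : EReal) * g x + (b : EReal) * g y) :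
    ConvexOn ℝ {x | g x ≠ ⊤} (fun x => (g x).toReal) := by
  have hcomb : ∀ x ∈ {x | g x ≠ ⊤}, ∀ y ∈ {x | g x ≠ ⊤}, ∀ a b : ℝ, 0 ≤ a → 0 ≤ b →
      a + b = 1 → g (a • x + b • y) ≤ ((a * (g x).toReal + b * (g y).toReal : ℝ) : EReal) := by
    intro x hx y hy a b ha hb hab
    rw [EReal.coe_add, EReal.coe_mul, EReal.coe_mul, EReal.coe_toReal hx (hbot x),
      EReal.coe_toReal hy (hbot y)]
    exact hconv x y a b ha hb hab
  refine ⟨fun x hx y hy a b ha hb hab => ?_, fun x hx y hy a b ha hb hab => ?_⟩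
  · exact ne_top_of_le_ne_top (EReal.coe_ne_top _) (hcomb x hx y hy a b ha hb hab)
  · exact EReal.toReal_le_toReal (hcomb x hx y hy a b ha hb hab) (hbot _) (EReal.coe_ne_top _)

section Prox

variable {E : Type*} [NormedAddCommGroup E] {g : E → EReal} {u p : E}

/-- `p ∈ prox_g u`. -/
def IsProx (g : E → EReal) (u p : E) : Prop :=
  ∀ y, ((1 / 2 * ‖u - p‖ ^ 2 : ℝ) : EReal) + g p ≤ ((1 / 2 * ‖u - y‖ ^ 2 : ℝ) : EReal) + g y

lemma IsProx.ne_top (hp : IsProx g u p) (hg : ∃ y, g y ≠ ⊤) : g p ≠ ⊤ := by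
  obtain ⟨y, hy⟩ := hg
  intro htop
  have h := hp y
  rw [htop, EReal.coe_add_top, top_le_iff] at h
  exact EReal.add_ne_top (EReal.coe_ne_top _) hy h

lemma IsProx.add_half_norm_sub_sq_le [InnerProductSpace ℝ E] {y : E} (hp : IsProx g u p)
    (hbot : ∀ x, g x ≠ ⊥)
    (hconv : ∀ x y : E, ∀ a b : ℝ, 0 ≤ a → 0 ≤ b → a + b = 1 →
      g (a • x + b • y) ≤ (a : EReal) * g x + (b : EReal) * g y)
    (hy : g y ≠ ⊤) :
    1 / 2 * ‖u - p‖ ^ 2 + (g p).toReal + 1 / 2 * ‖p - y‖ ^ 2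
      ≤ 1 / 2 * ‖u - y‖ ^ 2 + (g y).toReal := by
  have hp_top : g p ≠ ⊤ := hp.ne_top ⟨y, hy⟩
  have hmin : IsMinOn (fun v => 1 / 2 * ‖u - v‖ ^ 2 + (g v).toReal) {v | g v ≠ ⊤} p := by
    refine isMinOn_iff.2 fun v hv => ?_
    have h := hp v
    rw [← EReal.coe_toReal hp_top (hbot p), ← EReal.coe_toReal hv (hbot v)] at h
    exact_mod_cast h
  exact ((convexOn_toReal_setOf_ne_top hbot hconv).strongConvexOn_half_norm_sub_sq_add u
    ).add_mul_norm_sub_sq_le_of_isMinOn hp_top hy hmin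

end Prox

lemma norm_embed_sub_sq (n : ℕ) (y : EuclideanSpace ℝ (Fin n)) (w : EuclideanSpace ℂ (Fin n)) :
    ‖embed n y - w‖ ^ 2 = ‖rePart n w - y‖ ^ 2 + ∑ j, (w j).im ^ 2 := by
  rw [EuclideanSpace.norm_sq_eq, EuclideanSpace.norm_sq_eq, ← Finset.sum_add_distrib]
  refine Finset.sum_congr rfl fun j _ => ?_
  simp [embed, rePart, Complex.sq_norm, Complex.normSq_apply]
  ring

theorem fienup_sufficient_decrease_general (n : ℕ)
    (c : Fin n → ℝ)
    (g : EuclideanSpace ℝ (Fin n) → EReal)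
    (hProper : ∃ x, g x ≠ ⊤) (hNotBot : ∀ x, g x ≠ ⊥)
    (hConv : ∀ x y : EuclideanSpace ℝ (Fin n), ∀ a b : ℝ, 0 ≤ a → 0 ≤ b → a + b = 1 →
      g (a • x + b • y) ≤ (a : EReal) * g x + (b : EReal) * g y)
    (x : ℕ → EuclideanSpace ℝ (Fin n)) (z : ℕ → EuclideanSpace ℂ (Fin n))
    (hzmem : ∀ k, ∀ j, ‖dft n (z (k+1)) j‖ = c j)
    (hzmin : ∀ k, ∀ z' : EuclideanSpace ℂ (Fin n), (∀ j, ‖dft n z' j‖ = c j) →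
      ‖embed n (x k) - z (k+1)‖ ≤ ‖embed n (x k) - z'‖)
    (hxprox : ∀ k, ∀ y : EuclideanSpace ℝ (Fin n),
      ((1/2 * ‖rePart n (z (k+1)) - x (k+1)‖^2 : ℝ) : EReal) + g (x (k+1))
        ≤ ((1/2 * ‖rePart n (z (k+1)) - y‖^2 : ℝ) : EReal) + g y)
    (K : ℕ → EReal)
    (hK : ∀ k, K k = sInf {e : EReal | ∃ zz : EuclideanSpace ℂ (Fin n),
        (∀ j, ‖dft n zz j‖ = c j) ∧
        e = ((1/2 * ‖embed n (x k) - zz‖^2 : ℝ) : EReal)} + g (x k)) :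
    (∀ k, K (k+1) + ((1/2 * ‖x (k+1) - x k‖^2 : ℝ) : EReal) ≤ K k) ∧
    Antitone K ∧
    ((∃ m : ℝ, ∀ y : EuclideanSpace ℝ (Fin n),
        (m : EReal) ≤ sInf {e : EReal | ∃ zz : EuclideanSpace ℂ (Fin n),
          (∀ j, ‖dft n zz j‖ = c j) ∧
          e = ((1/2 * ‖embed n y - zz‖^2 : ℝ) : EReal)} + g y) →
      Summable (fun k => ‖x (k+1) - x k‖^2)) := by
  have hprox : ∀ k, IsProx g (rePart n (z (k + 1))) (x (k + 1)) := hxprox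
  have hfin : ∀ k, g (x (k + 1)) ≠ ⊤ := fun k => (hprox k).ne_top hProper
  have hKk : ∀ k, K k = ((1 / 2 * ‖embed n (x k) - z (k + 1)‖ ^ 2 : ℝ) : EReal) + g (x k) :=
    fun k => by
      rw [hK k, EReal.sInf_setOf_coe_eq_of_forall_le (hzmem k) fun z' hz' => by
        gcongr; exact hzmin k z' hz']
  have step : ∀ k, K (k + 1) + ((1 / 2 * ‖x (k + 1) - x k‖ ^ 2 : ℝ) : EReal) ≤ K k := by
    intro k
    rcases eq_or_ne (g (x k)) ⊤ with htop | hk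
    · rw [hKk k, htop, EReal.coe_add_top]
      exact le_top
    have hthree := (hprox k).add_half_norm_sub_sq_le hNotBot hConv hk
    have hproj :
        ‖embed n (x (k + 1)) - z (k + 1 + 1)‖ ^ 2 ≤ ‖embed n (x (k + 1)) - z (k + 1)‖ ^ 2 := by
      gcongr; exact hzmin (k + 1) _ (hzmem k)
    have hsplit₁ := norm_embed_sub_sq n (x (k + 1)) (z (k + 1))
    have hsplit₀ := norm_embed_sub_sq n (x k) (z (k + 1))
    rw [hKk, hKk, ← EReal.coe_toReal (hfin k) (hNotBot _), ← EReal.coe_toReal hk (hNotBot _)]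
    norm_cast
    linarith
  refine ⟨step, antitone_nat_of_succ_le fun k =>
    (le_add_of_nonneg_right (EReal.coe_nonneg.2 (by positivity))).trans (step k), ?_⟩
  rintro ⟨m, hm⟩
  have hsum : Summable fun k => 1 / 2 * ‖x (k + 2) - x (k + 1)‖ ^ 2 :=
    EReal.summable_of_forall_add_le (K := fun k => K (k + 1)) (m := m) (fun k => by positivity)
      (fun k => step (k + 1)) (fun k => (hK (k + 1)).symm ▸ hm _)
      (by rw [hKk]; exact EReal.add_ne_top (EReal.coe_ne_top _) (hfin 0))
  exact (summable_nat_add_iff 1).1 (by simpa using hsum.mul_left 2)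

/-- sufficient decrease of alternating minimization / Fienup: for the
iteration `z^{k+1} ∈ P_{Z_c}(x^k)`, `x^{k+1} = prox_g(Re z^{k+1})`, the objective values
`K^k = min_{z∈Z_c} ½‖x^k − z‖² + g(x^k)` satisfy
`K^{k+1} + ½‖x^{k+1} − x^k‖² ≤ K^k`; hence `{K^k}` is nonincreasing and
`Σ_k ‖x^{k+1} − x^k‖² < ∞` whenever the objective is bounded below. -/
theorem fienup_sufficient_decrease (n : ℕ) (hn : 0 < n)
    (c : Fin n → ℝ) (hc : ∀ j, 0 ≤ c j)
    (g : EuclideanSpace ℝ (Fin n) → EReal)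
    (hProper : ∃ x, g x ≠ ⊤) (hNotBot : ∀ x, g x ≠ ⊥)
    (hLsc : LowerSemicontinuous g)
    (hConv : ∀ x y : EuclideanSpace ℝ (Fin n), ∀ a b : ℝ, 0 ≤ a → 0 ≤ b → a + b = 1 →
      g (a • x + b • y) ≤ (a : EReal) * g x + (b : EReal) * g y)
    (x : ℕ → EuclideanSpace ℝ (Fin n)) (z : ℕ → EuclideanSpace ℂ (Fin n))
    (hzmem : ∀ k, ∀ j, ‖dft n (z (k+1)) j‖ = c j)
    (hzmin : ∀ k, ∀ z' : EuclideanSpace ℂ (Fin n), (∀ j, ‖dft n z' j‖ = c j) →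
      ‖embed n (x k) - z (k+1)‖ ≤ ‖embed n (x k) - z'‖)
    (hxprox : ∀ k, ∀ y : EuclideanSpace ℝ (Fin n),
      ((1/2 * ‖rePart n (z (k+1)) - x (k+1)‖^2 : ℝ) : EReal) + g (x (k+1))
        ≤ ((1/2 * ‖rePart n (z (k+1)) - y‖^2 : ℝ) : EReal) + g y)
    (K : ℕ → EReal)
    (hK : ∀ k, K k = sInf {e : EReal | ∃ zz : EuclideanSpace ℂ (Fin n),
        (∀ j, ‖dft n zz j‖ = c j) ∧
        e = ((1/2 * ‖embed n (x k) - zz‖^2 : ℝ) : EReal)} + g (x k)) :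
    (∀ k, K (k+1) + ((1/2 * ‖x (k+1) - x k‖^2 : ℝ) : EReal) ≤ K k) ∧
    Antitone K ∧
    ((∃ m : ℝ, ∀ y : EuclideanSpace ℝ (Fin n),
        (m : EReal) ≤ sInf {e : EReal | ∃ zz : EuclideanSpace ℂ (Fin n),
          (∀ j, ‖dft n zz j‖ = c j) ∧
          e = ((1/2 * ‖embed n y - zz‖^2 : ℝ) : EReal)} + g y) →
      Summable (fun k => ‖x (k+1) - x k‖^2)) :=
  fienup_sufficient_decrease_general n c g hProper hNotBot hConv x z hzmem hzmin hxprox K hK
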